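/- Let X be an invertible n×n complex cross matrix, and for each 0-based index j set α_j = X j j · X (n-1-j) (n-1-j) − X j (n-1-j) · X (n-1-j) j. Then the entries of X⁻¹ are given by: (X⁻¹) j j = X (n-1-j) (n-1-j) / α_j whenever (2j + 1 : ℕ) ≠ n; (X⁻¹) (n-1-j) j = − X (n-1-j) j / α_j whenever (2j + 1 : ℕ) ≠ n; and if n = 2k+1 then (X⁻¹) k k = 1 / (X k k); all other entries of X⁻¹ are zero. -/

import Mathlib

/-!
Matrices supported on the diagonal and on the graph of an involution `σ` of the indices form a
subalgebra, because the index set splits into the `σ`-orbits `{j, σ j}`. The inverse of an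
invertible matrix lies in every subalgebra containing it, so `X⁻¹` is again a cross matrix and
`X * X⁻¹ = 1` decouples into a `2 × 2` system on each orbit `{j, n - 1 - j}` (a `1 × 1` one at
the centre), which Cramer's rule solves.
-/

/-- An `n × n` complex matrix is a *cross matrix* if its nonzero entries lie
only on the main diagonal and the anti-diagonal (0-based indices). -/
def IsCrossMatrix {n : ℕ} (X : Matrix (Fin n) (Fin n) ℂ) : Prop :=
  ∀ i j : Fin n, j ≠ i → (i : ℕ) + (j : ℕ) + 1 ≠ n → X i j = 0

namespace Matrix

variable {R : Type*} [CommRing R] {ι : Type*} [Fintype ι] [DecidableEq ι]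

-- A finite-dimensional algebra is Artinian, so a non-zero-divisor of `A` is a unit of `A`.
theorem nonsing_inv_mem {K : Type*} [Field K] {A : Subalgebra K (Matrix ι ι K)}
    {X : Matrix ι ι K} (hX : X ∈ A) (h : IsUnit X) : X⁻¹ ∈ A := by
  have hreg : (⟨X, hX⟩ : A) ∈ nonZeroDivisors A :=
    mem_nonZeroDivisors_of_injective (f := A.val) Subtype.val_injective h.mem_nonZeroDivisors
  obtain ⟨u, hu⟩ := IsArtinianRing.isUnit_of_nonZeroDivisor_of_isIntegral' (R := K) hreg
  rw [inv_eq_right_inv (congrArg Subtype.val (hu ▸ u.mul_inv))]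
  exact (u⁻¹ : Aˣ).1.2

variable {σ : ι → ι}

variable (R) in
def crossSubalgebra (hσ : Function.Involutive σ) : Subalgebra R (Matrix ι ι R) where
  carrier := {X | ∀ i j, j ≠ i → j ≠ σ i → X i j = 0}
  mul_mem' {X Y} hX hY i k hki hkσi := by
    rw [mul_apply]
    refine Finset.sum_eq_zero fun j _ => ?_
    by_cases hji : j = i
    · rw [hji, hY i k hki hkσi, mul_zero]
    by_cases hjσi : j = σ i
    · rw [hjσi, hY _ k hkσi (by rwa [hσ]), mul_zero]
    · rw [hX i j hji hjσi, zero_mul]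
  add_mem' {X Y} hX hY i j h₁ h₂ := by
    rw [add_apply, hX i j h₁ h₂, hY i j h₁ h₂, add_zero]
  algebraMap_mem' r i j h _ := by
    rw [algebraMap_matrix_apply, if_neg h.symm]

variable {hσ : Function.Involutive σ} {X : Matrix ι ι R}

theorem mem_crossSubalgebra :
    X ∈ crossSubalgebra R hσ ↔ ∀ i j, j ≠ i → j ≠ σ i → X i j = 0 := Iff.rfl

theorem mul_apply_of_mem_crossSubalgebra (hX : X ∈ crossSubalgebra R hσ) (Y : Matrix ι ι R)
    {i : ι} (hi : σ i ≠ i) (k : ι) :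
    (X * Y) i k = X i i * Y i k + X i (σ i) * Y (σ i) k :=
  mul_apply.trans <| Fintype.sum_eq_add i (σ i) hi.symm fun j ⟨hji, hjσi⟩ => by
    rw [hX i j hji hjσi, zero_mul]

theorem mul_apply_of_mem_crossSubalgebra_of_eq (hX : X ∈ crossSubalgebra R hσ)
    (Y : Matrix ι ι R) {i : ι} (hi : σ i = i) (k : ι) : (X * Y) i k = X i i * Y i k :=
  mul_apply.trans <| Fintype.sum_eq_single i fun j hji => by
    rw [hX i j hji (by rwa [hi]), zero_mul]

end Matrix

-- `(p, r)` is the first column of a right inverse of `!![a, b; c, d]`; `h₃` excludes a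
-- vanishing determinant.
theorem eq_div_of_mul_eq_one_fin_two {K : Type*} [Field K] {a b c d p q r s : K}
    (h₁ : a * p + b * r = 1) (h₂ : c * p + d * r = 0) (h₃ : c * q + d * s = 1) :
    p = d / (a * d - b * c) ∧ r = -c / (a * d - b * c) := by
  have hp : (a * d - b * c) * p = d := by linear_combination d * h₁ - b * h₂
  have hr : (a * d - b * c) * r = -c := by linear_combination a * h₂ - c * h₁
  have hdet : a * d - b * c ≠ 0 := by
    intro h0
    rw [h0, zero_mul] at hp hr
    rw [← hp, neg_eq_zero.mp hr.symm] at h₃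
    simp at h₃
  exact ⟨eq_div_of_mul_eq hdet (by rw [mul_comm, hp]),
    eq_div_of_mul_eq hdet (by rw [mul_comm, hr])⟩

theorem Fin.eq_rev_iff_val_add_val_add_one_eq {n : ℕ} {i j : Fin n} :
    j = i.rev ↔ (i : ℕ) + j + 1 = n := by
  rw [Fin.ext_iff, Fin.val_rev]
  omega

open Matrix

theorem isCrossMatrix_iff_mem_crossSubalgebra {n : ℕ} {X : Matrix (Fin n) (Fin n) ℂ} :
    IsCrossMatrix X ↔ X ∈ crossSubalgebra ℂ Fin.rev_involutive := by
  simp only [IsCrossMatrix, mem_crossSubalgebra, Ne, Fin.eq_rev_iff_val_add_val_add_one_eq]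

/-- Explicit formula for the inverse of an invertible cross matrix.  With
`α_j = X j j * X (n-1-j) (n-1-j) - X j (n-1-j) * X (n-1-j) j` (where the index
`n - 1 - j` is `j.rev`), the diagonal entry of the inverse is
`X (n-1-j) (n-1-j) / α_j`, the anti-diagonal entry is `- X (n-1-j) j / α_j`,
the central entry (when `n` is odd) is `1 / X k k`, and all other entries
vanish. -/
theorem crossMatrix_inv_entries {n : ℕ}
    (X : Matrix (Fin n) (Fin n) ℂ) (hX : IsCrossMatrix X) (h : IsUnit X) :
    (∀ j : Fin n, 2 * (j : ℕ) + 1 ≠ n →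
      X⁻¹ j j =
        X j.rev j.rev / (X j j * X j.rev j.rev - X j j.rev * X j.rev j)) ∧
    (∀ j : Fin n, 2 * (j : ℕ) + 1 ≠ n →
      X⁻¹ j.rev j =
        -X j.rev j / (X j j * X j.rev j.rev - X j j.rev * X j.rev j)) ∧
    (∀ j : Fin n, 2 * (j : ℕ) + 1 = n → X⁻¹ j j = 1 / X j j) ∧
    (∀ i j : Fin n, j ≠ i → (i : ℕ) + (j : ℕ) + 1 ≠ n → X⁻¹ i j = 0) := by
  rw [isCrossMatrix_iff_mem_crossSubalgebra] at hX
  have hXinv := nonsing_inv_mem hX h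
  have hmul : X * X⁻¹ = 1 := mul_nonsing_inv X ((isUnit_iff_isUnit_det X).mp h)
  have hcentre {j : Fin n} : j.rev = j ↔ 2 * (j : ℕ) + 1 = n := by
    rw [eq_comm, Fin.eq_rev_iff_val_add_val_add_one_eq, two_mul]
  have hblock {j : Fin n} (hj : 2 * (j : ℕ) + 1 ≠ n) :
      X⁻¹ j j = X j.rev j.rev / (X j j * X j.rev j.rev - X j j.rev * X j.rev j) ∧
      X⁻¹ j.rev j = -X j.rev j / (X j j * X j.rev j.rev - X j j.rev * X j.rev j) := by
    have hj : j.rev ≠ j := hcentre.not.mpr hj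
    have hj' : j.rev.rev ≠ j.rev := by rw [Fin.rev_rev]; exact hj.symm
    have e₁ := mul_apply_of_mem_crossSubalgebra hX X⁻¹ hj j
    have e₂ := mul_apply_of_mem_crossSubalgebra hX X⁻¹ hj' j
    have e₃ := mul_apply_of_mem_crossSubalgebra hX X⁻¹ hj' j.rev
    simp only [hmul, Fin.rev_rev, one_apply_eq, one_apply_ne hj] at e₁ e₂ e₃
    exact eq_div_of_mul_eq_one_fin_two e₁.symm ((add_comm _ _).trans e₂.symm)
      ((add_comm _ _).trans e₃.symm)
  refine ⟨fun j hj => (hblock hj).1, fun j hj => (hblock hj).2, fun j hj => ?_,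
    fun i j hji hij => hXinv i j hji (Fin.eq_rev_iff_val_add_val_add_one_eq.not.mpr hij)⟩
  have e := mul_apply_of_mem_crossSubalgebra_of_eq hX X⁻¹ (hcentre.mpr hj) j
  rw [hmul, one_apply_eq] at e
  exact eq_one_div_of_mul_eq_one_right e.symm
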